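/- (Well-posedness of the optimality system) For every u_d ∈ L²(Q) and ϱ > 0, the saddle point problem: find (u,p) ∈ X₀ × X_T such that 𝓑(u,p;v,q) = −⟨u_d, q⟩_{L²(Q)} for all (v,q) ∈ Y×Y, admits a unique solution. -/

import Mathlib

/-!
The inf-sup condition says that `z ↦ 𝓑(z, ·)` is bounded below as a map into the dual of
`Y × Y`, so it is injective with closed range. Transporting to the equivalent Hilbert norm on
`Y × Y` and composing with the Riesz map, a vector orthogonal to the range is a `w` with
`𝓑(·, w) = 0`, hence `w = 0` by injectivity of the adjoint. So the map is onto the dual, and the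
right-hand side `(v, q) ↦ -⟨u_d, q⟩` has exactly one preimage (Nečas–Babuška).
-/

open Function

theorem ContinuousLinearMap.iSup_div_norm_le_opNorm {E : Type*} [NormedAddCommGroup E]
    [NormedSpace ℝ E] (f : StrongDual ℝ E) :
    ⨆ w : {w : E // w ≠ 0}, f w / ‖(w : E)‖ ≤ ‖f‖ :=
  Real.iSup_le (fun w => (div_le_iff₀ (norm_pos_iff.2 w.2)).2
    ((le_abs_self _).trans (f.le_opNorm w))) (norm_nonneg f)

section NecasBabuska

variable {Z H W : Type*} [NormedAddCommGroup Z] [NormedSpace ℝ Z] [CompleteSpace Z]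
  [NormedAddCommGroup H] [InnerProductSpace ℝ H] [CompleteSpace H]
  [NormedAddCommGroup W] [NormedSpace ℝ W]

theorem ContinuousLinearMap.bijective_of_antilipschitz_of_injective_flip
    (A : Z →L[ℝ] StrongDual ℝ H) {K : NNReal} (hA : AntilipschitzWith K A)
    (hflip : Injective A.flip) : Bijective A := by
  let T : Z →L[ℝ] H :=
    (InnerProductSpace.toDual ℝ H).symm.toContinuousLinearEquiv.toContinuousLinearMap ∘L A
  have hT : ∀ z h, inner ℝ (T z) h = A z h := fun z h => InnerProductSpace.toDual_symm_apply
  have hclosed : IsClosed (T.range : Set H) :=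
    (((InnerProductSpace.toDual ℝ H).symm.antilipschitz).comp hA).isClosed_range
      T.uniformContinuous
  have horth : T.rangeᗮ = ⊥ := by
    refine (Submodule.eq_bot_iff _).2 fun h hh => hflip ?_
    ext z
    simpa [← hT, real_inner_comm] using (Submodule.mem_orthogonal' _ h).1 hh (T z) ⟨z, rfl⟩
  refine ⟨hA.injective, fun f => ?_⟩
  obtain ⟨z, hz⟩ : (InnerProductSpace.toDual ℝ H).symm f ∈ T.range := by
    rw [← hclosed.submodule_topologicalClosure_eq,
      Submodule.topologicalClosure_eq_top_iff.2 horth]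
    trivial
  exact ⟨z, by simpa [T] using hz⟩

theorem ContinuousLinearMap.bijective_of_antilipschitz_of_injective_flip_of_equiv
    (e : H ≃L[ℝ] W) (A : Z →L[ℝ] StrongDual ℝ W) {K : NNReal} (hA : AntilipschitzWith K A)
    (hflip : Injective A.flip) : Bijective A := by
  let D : StrongDual ℝ W ≃L[ℝ] StrongDual ℝ H :=
    (e.arrowCongr (ContinuousLinearEquiv.refl ℝ ℝ)).symm
  have hDA : Bijective (D.toContinuousLinearMap ∘L A) := by
    refine bijective_of_antilipschitz_of_injective_flip _ (D.antilipschitz.comp hA) ?_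
    have : (D.toContinuousLinearMap ∘L A).flip = A.flip ∘ e := by
      ext h z; rfl
    rw [this]
    exact hflip.comp e.injective
  exact (D.bijective.of_comp_iff' A).1 hDA

end NecasBabuska

/-- well-posedness of the optimality system. `X₀`, `X_T` are the
Hilbert trial spaces and `Y` the Hilbert test space; `B` is the bounded
bilinear form `𝓑` on `(X₀ × X_T) × (Y × Y)`, satisfying the inf-sup
(stability) condition with constant `1/(2√2)` and the injectivity of the
adjoint. `g` is the continuous functional `q ↦ ⟨u_d, q⟩_{L²(Q)}` generated by
`u_d ∈ L²(Q)`. Then the saddle point problem: find `(u,p) ∈ X₀ × X_T` with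
`𝓑(u,p;v,q) = −⟨u_d,q⟩_{L²(Q)}` for all `(v,q) ∈ Y × Y`, has a unique
solution. -/
theorem stmt7 {X₀ XT Y : Type*}
    [NormedAddCommGroup X₀] [InnerProductSpace ℝ X₀] [CompleteSpace X₀]
    [NormedAddCommGroup XT] [InnerProductSpace ℝ XT] [CompleteSpace XT]
    [NormedAddCommGroup Y] [InnerProductSpace ℝ Y] [CompleteSpace Y]
    (B : (X₀ × XT) →ₗ[ℝ] (Y × Y) →ₗ[ℝ] ℝ) (c : ℝ)
    (hbound : ∀ z w, |B z w| ≤ c * ‖z‖ * ‖w‖)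
    (hinfsup : ∀ z : X₀ × XT, (1 / (2 * Real.sqrt 2)) * ‖z‖ ≤
        ⨆ w : {w : Y × Y // w ≠ 0}, B z (w : Y × Y) / ‖(w : Y × Y)‖)
    (hinj : ∀ w : Y × Y, w ≠ 0 → ∃ z : X₀ × XT, 0 < B z w)
    (g : Y →L[ℝ] ℝ) :
    ∃! up : X₀ × XT, ∀ vq : Y × Y, B up vq = -(g vq.2) := by
  let B' : (X₀ × XT) →L[ℝ] StrongDual ℝ (Y × Y) := B.mkContinuous₂ c hbound
  have hlow : ∀ z, ‖z‖ ≤ (2 * NNReal.sqrt 2 : NNReal) * ‖B' z‖ := by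
    intro z
    have := (hinfsup z).trans (B' z).iSup_div_norm_le_opNorm
    push_cast
    rwa [one_div, inv_mul_le_iff₀ (by positivity)] at this
  have hflip : Injective B'.flip := by
    refine (injective_iff_map_eq_zero _).2 fun w hw => ?_
    by_contra hw0
    obtain ⟨z, hz⟩ := hinj w hw0
    exact hz.ne' (DFunLike.congr_fun hw z)
  have hanti : AntilipschitzWith (2 * NNReal.sqrt 2) B' :=
    AddMonoidHomClass.antilipschitz_of_bound B' hlow
  have hB' := B'.bijective_of_antilipschitz_of_injective_flip_of_equiv
    (WithLp.prodContinuousLinearEquiv 2 ℝ Y Y) hanti hflip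
  obtain ⟨up, hup, huniq⟩ :=
    (bijective_iff_existsUnique _).1 hB' (-(g ∘L ContinuousLinearMap.snd ℝ Y Y))
  exact ⟨up, fun vq => DFunLike.congr_fun hup vq,
    fun up' h => huniq up' (ContinuousLinearMap.ext h)⟩
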